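/- arXiv:2301.09543 — 4 statements merged into one kernel-verified Lean document; each statement's English description precedes it below -/
import Mathlib

section
/- Suppose x ≥ 16ℓ^{3/2} is real and ℓ ≥ 1. Then Σ_{σ} x^{c(σ)} ≤ exp(ℓ^{3/4})·ℓ!!·x^{ℓ/2}, where the sum is over fixed-point-free permutations σ of {1,...,ℓ} and c(σ) denotes the number of cycles of σ. -/
open scoped Classical

/-- The number of cycles of a permutation, counting fixed points. -/
def cycleCount {k : ℕ} (σ : Equiv.Perm (Fin k)) : ℕ :=
  Multiset.card σ.cycleType + (k - σ.support.card)

/-!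
Write `S n x` for the sum of `x ^ c(σ)` over the derangements `σ` of `n` points. Cutting the
point `0` out of its cycle gives `S (n + 2) = (n + 1) * (S (n + 1) + x * S n)`: if `σ 0 = p`,
then either `0` and `p` form a 2-cycle (a derangement of the other `n` points and one cycle
more), or the rest is a derangement of `n + 1` points with the same number of cycles.
For `t = √x + √ℓ` one has `√ℓ * t + x ≤ t ^ 2`, which is exactly what makes
`S n ≤ √(n!) * t ^ n` pass through the recurrence for `n ≤ ℓ`. Finally `√(ℓ!) ≤ ℓ‼` and
`(√x + √ℓ) ^ ℓ ≤ x ^ (ℓ / 2) * exp (ℓ ^ (3/2) / √x) ≤ x ^ (ℓ / 2) * exp (ℓ ^ (3/4))`.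
-/

open Equiv Finset

namespace Equiv.Perm

theorem forall_conj_apply_eq_self_imp_iff {α : Type*} (σ τ : Perm α) (j : α) :
    (∀ i, (τ * σ * τ⁻¹) i = i → i = τ j) ↔ ∀ i, σ i = i → i = j := by
  rw [← τ.forall_congr_right]
  simp

variable {α : Type*} [Fintype α] [DecidableEq α]

-- Unlike `cycleType`, this counts fixed points as cycles of length one.
def numCycles (σ : Perm α) : ℕ :=
  Multiset.card σ.cycleType + (Fintype.card α - #σ.support)

theorem cycleCount_eq_numCycles {n : ℕ} (σ : Perm (Fin n)) :
    cycleCount σ = σ.numCycles := by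
  rw [cycleCount, numCycles, Fintype.card_fin]

theorem numCycles_conj (σ τ : Perm α) : numCycles (τ * σ * τ⁻¹) = numCycles σ := by
  rw [numCycles, numCycles, cycleType_conj, card_support_conj]

theorem numCycles_one : numCycles (1 : Perm α) = Fintype.card α := by
  simp [numCycles]

theorem IsCycle.numCycles_eq {c : Perm α} (hc : c.IsCycle) :
    c.numCycles = Fintype.card α - #c.support + 1 := by
  rw [Perm.numCycles, hc.cycleType, Multiset.card_singleton, add_comm]

theorem Disjoint.numCycles_mul_add_card {σ τ : Perm α} (h : σ.Disjoint τ) :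
    numCycles (σ * τ) + Fintype.card α = numCycles σ + numCycles τ := by
  have hle : #σ.support + #τ.support ≤ Fintype.card α := by
    rw [← h.card_support_mul]; exact card_le_univ _
  simp only [Perm.numCycles, h.cycleType_mul, Multiset.card_add, h.card_support_mul]
  omega

theorem IsCycle.numCycles_swap_mul {c : Perm α} (hc : c.IsCycle) {a : α} (ha : c a ≠ a) :
    numCycles (swap a (c a) * c) = numCycles c + 1 := by
  have hle : #c.support ≤ Fintype.card α := card_le_univ _
  by_cases h2 : c (c a) = a
  · have hsw : c = swap a (c a) := hc.eq_swap_of_apply_apply_eq_self ha h2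
    have hcard : #c.support = 2 := by rw [hsw, card_support_swap (Ne.symm ha)]
    have hone : swap a (c a) * c = 1 := by
      rw [← swap_mul_self a (c a)]; exact congrArg _ hsw
    rw [hc.numCycles_eq, hone, numCycles_one]
    omega
  · have hsupp := c.support_swap_mul_eq a h2
    have hmem : a ∈ c.support := mem_support.mpr ha
    rw [(hc.swap_mul ha h2).numCycles_eq, hc.numCycles_eq, hsupp, sdiff_singleton_eq_erase,
      card_erase_of_mem hmem]
    have := card_pos.mpr ⟨a, hmem⟩
    omega

theorem numCycles_swap_mul {f : Perm α} {a : α} (ha : f a ≠ a) :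
    numCycles (swap a (f a) * f) = numCycles f + 1 := by
  -- `f = c * d` with `c` the cycle through `a` and `d` disjoint from it; the swap only touches `c`.
  set c := f.cycleOf a
  have hc : c.IsCycle := f.isCycle_cycleOf ha
  have hca : c a = f a := f.cycleOf_apply_self a
  have hdisj : (f * c⁻¹).Disjoint c := disjoint_mul_inv_of_mem_cycleFactorsFinset
    (cycleOf_mem_cycleFactorsFinset_iff.mpr (mem_support.mpr ha))
  have hf : f = c * (f * c⁻¹) := by rw [← hdisj.commute.eq, inv_mul_cancel_right]
  have hsub : (swap a (c a) * c).support ≤ c.support := by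
    refine (support_mul_le _ _).trans (sup_le ?_ le_rfl)
    rw [support_swap (Ne.symm (hca ▸ ha)), insert_subset_iff, singleton_subset_iff]
    exact ⟨mem_support.mpr (hca ▸ ha), apply_mem_support.mpr (mem_support.mpr (hca ▸ ha))⟩
  have hsplit := hdisj.symm.numCycles_mul_add_card
  have hjoin := (hdisj.symm.mono hsub le_rfl).numCycles_mul_add_card
  rw [← hf] at hsplit
  rw [mul_assoc, ← hf, hc.numCycles_swap_mul (hca ▸ ha), hca] at hjoin
  omega

theorem decomposeFin_symm_eq_swap_mul {n : ℕ} (p : Fin (n + 1)) (d : Perm (Fin n)) :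
    decomposeFin.symm (p, d) = swap 0 p * decomposeFin.symm (0, d) := by
  ext k
  refine Fin.cases ?_ (fun i => ?_) k <;> simp

theorem decomposeFin_symm_zero_eq_extendDomain {n : ℕ} (d : Perm (Fin n)) :
    decomposeFin.symm (0, d) = d.extendDomain (finSuccAboveEquiv 0) := by
  ext k
  refine Fin.cases ?_ (fun i => ?_) k
  · rw [extendDomain_apply_not_subtype] <;> simp
  · have : i.succ = (finSuccAboveEquiv 0 i : Fin (n + 1)) := by simp [finSuccAboveEquiv_apply]
    rw [this, extendDomain_apply_image]
    simp [finSuccAboveEquiv_apply]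

theorem numCycles_decomposeFin_symm_zero {n : ℕ} (d : Perm (Fin n)) :
    numCycles (decomposeFin.symm (0, d)) = numCycles d + 1 := by
  have hct : (decomposeFin.symm (0, d)).cycleType = d.cycleType := by
    rw [decomposeFin_symm_zero_eq_extendDomain, cycleType_extendDomain]
  have hsupp : #(decomposeFin.symm (0, d)).support = #d.support := by
    rw [← sum_cycleType, hct, sum_cycleType]
  have hle : #d.support ≤ n := by simpa using card_le_univ d.support
  rw [numCycles, numCycles, hct, hsupp, Fintype.card_fin, Fintype.card_fin]
  omega

theorem numCycles_decomposeFin_symm_of_ne_zero {n : ℕ} {p : Fin (n + 1)} (hp : p ≠ 0)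
    (d : Perm (Fin n)) : numCycles (decomposeFin.symm (p, d)) = numCycles d := by
  have h := numCycles_swap_mul (f := decomposeFin.symm (p, d)) (a := 0) (by simpa using hp)
  rw [decomposeFin_symm_apply_zero, decomposeFin_symm_eq_swap_mul p d, ← mul_assoc,
    swap_mul_self, one_mul, numCycles_decomposeFin_symm_zero, ← decomposeFin_symm_eq_swap_mul] at h
  omega

theorem decomposeFin_symm_apply_succ_eq_self_iff {n : ℕ} (p : Fin (n + 1)) (d : Perm (Fin n))
    (i : Fin n) : decomposeFin.symm (p, d) i.succ = i.succ ↔ d i = i ∧ i.succ ≠ p := by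
  rw [decomposeFin_symm_apply_succ, swap_apply_eq_iff]
  by_cases hp : i.succ = p
  · simp [← hp]
  · rw [swap_apply_of_ne_of_ne (Fin.succ_ne_zero i) hp]
    simp [hp]

theorem forall_decomposeFin_symm_succ_apply_ne_iff {n : ℕ} (j : Fin (n + 1))
    (d : Perm (Fin (n + 1))) :
    (∀ k, decomposeFin.symm (j.succ, d) k ≠ k) ↔ ∀ i, d i = i → i = j := by
  rw [Fin.forall_fin_succ]
  simp only [decomposeFin_symm_apply_zero, ne_eq, decomposeFin_symm_apply_succ_eq_self_iff,
    Fin.succ_ne_zero, not_false_eq_true, true_and, Fin.succ_inj, not_and, not_not]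

theorem forall_decomposeFin_symm_zero_apply_eq_self_iff {n : ℕ} (d : Perm (Fin n)) :
    (∀ k, decomposeFin.symm (0, d) k = k ↔ k = 0) ↔ ∀ i, d i ≠ i := by
  rw [Fin.forall_fin_succ]
  simp [Fin.succ_ne_zero]

end Equiv.Perm

open Equiv.Perm

def derangementCycleSum {R : Type*} [CommSemiring R] (n : ℕ) (x : R) : R :=
  ∑ σ ∈ univ.filter (fun σ : Perm (Fin n) => ∀ i, σ i ≠ i), x ^ σ.numCycles

section DerangementCycleSum

variable {R : Type*} [CommSemiring R] (n : ℕ) (x : R)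

theorem derangementCycleSum_zero : derangementCycleSum 0 x = 1 := by
  simp [derangementCycleSum, numCycles]

theorem derangementCycleSum_one : derangementCycleSum 1 x = 0 := by
  rw [derangementCycleSum, filter_eq_empty_iff.mpr fun σ _ h => h 0 (Subsingleton.elim _ _),
    sum_empty]

theorem sum_perm_fin_succ {M : Type*} [AddCommMonoid M] (F : Perm (Fin (n + 1)) → M) :
    ∑ σ, F σ = ∑ p, ∑ d, F (decomposeFin.symm (p, d)) := by
  rw [← decomposeFin.symm.sum_comp, Fintype.sum_prod_type]

theorem sum_pow_numCycles_fixedPoints_eq_zero :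
    ∑ σ ∈ univ.filter (fun σ : Perm (Fin (n + 1)) => ∀ i, σ i = i ↔ i = 0), x ^ σ.numCycles =
      x * derangementCycleSum n x := by
  rw [sum_filter, sum_perm_fin_succ, Fin.sum_univ_succ, derangementCycleSum, sum_filter,
    mul_sum]
  have hzero (j : Fin n) (d : Perm (Fin n)) :
      ¬ ∀ k, decomposeFin.symm (j.succ, d) k = k ↔ k = 0 :=
    fun h => Fin.succ_ne_zero j (by simpa using (h 0).2 rfl)
  simp only [forall_decomposeFin_symm_zero_apply_eq_self_iff, numCycles_decomposeFin_symm_zero,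
    hzero, if_false, sum_const_zero, add_zero, pow_succ', mul_ite, mul_zero]

theorem sum_pow_numCycles_fixedPoints_subset_singleton (j k : Fin n) :
    ∑ σ ∈ univ.filter (fun σ : Perm (Fin n) => ∀ i, σ i = i → i = j), x ^ σ.numCycles =
      ∑ σ ∈ univ.filter (fun σ : Perm (Fin n) => ∀ i, σ i = i → i = k), x ^ σ.numCycles := by
  refine sum_equiv (MulAut.conj (swap j k)).toEquiv (fun σ => ?_) (fun σ _ => ?_)
  · simp only [mem_filter, mem_univ, true_and, MulEquiv.toEquiv_eq_coe, MulEquiv.coe_toEquiv,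
      MulAut.conj_apply]
    rw [← forall_conj_apply_eq_self_imp_iff σ (swap j k) j, swap_apply_left]
  · simp only [MulEquiv.toEquiv_eq_coe, MulEquiv.coe_toEquiv, MulAut.conj_apply, numCycles_conj]

theorem sum_pow_numCycles_fixedPoints_subset_zero :
    ∑ σ ∈ univ.filter (fun σ : Perm (Fin (n + 1)) => ∀ i, σ i = i → i = 0), x ^ σ.numCycles =
      derangementCycleSum (n + 1) x + x * derangementCycleSum n x := by
  rw [← sum_pow_numCycles_fixedPoints_eq_zero, derangementCycleSum,
    ← sum_filter_add_sum_filter_not _ (fun σ => σ 0 = 0), add_comm, filter_filter,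
    filter_filter]
  congr 1 <;> refine sum_congr (filter_congr fun σ _ => ?_) fun _ _ => rfl
  · exact ⟨fun h i hi => h.2 (h.1 i hi ▸ hi), fun h => ⟨fun i hi => absurd hi (h i), h 0⟩⟩
  · exact ⟨fun h i => ⟨h.1 i, fun hi => hi ▸ h.2⟩, fun h => ⟨fun i => (h i).1, (h 0).2 rfl⟩⟩

theorem derangementCycleSum_add_two :
    derangementCycleSum (n + 2) x =
      (n + 1) * (derangementCycleSum (n + 1) x + x * derangementCycleSum n x) := by
  rw [← sum_pow_numCycles_fixedPoints_subset_zero, derangementCycleSum, sum_filter,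
    sum_perm_fin_succ, Fin.sum_univ_succ]
  have hzero (d : Perm (Fin (n + 1))) : ¬ ∀ k, decomposeFin.symm (0, d) k ≠ k :=
    fun h => h 0 (decomposeFin_symm_apply_zero 0 d)
  simp only [hzero, if_false, sum_const_zero, zero_add, forall_decomposeFin_symm_succ_apply_ne_iff,
    numCycles_decomposeFin_symm_of_ne_zero (Fin.succ_ne_zero _), ← sum_filter]
  rw [sum_congr rfl fun j _ => sum_pow_numCycles_fixedPoints_subset_singleton (n + 1) x j 0,
    sum_const, card_univ, Fintype.card_fin, nsmul_eq_mul]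
  push_cast
  ring

end DerangementCycleSum

open Nat Real

theorem Nat.factorial_le_doubleFactorial_sq (n : ℕ) : n ! ≤ n‼ ^ 2 := by
  induction n using Nat.twoStepInduction with
  | zero => rfl
  | one => rfl
  | more n ih _ =>
    rw [factorial_succ, factorial_succ, doubleFactorial_add_two, mul_pow, ← mul_assoc]
    exact Nat.mul_le_mul (by nlinarith) ih

theorem sqrt_factorial_le_doubleFactorial (n : ℕ) : √(n ! : ℝ) ≤ n‼ :=
  sqrt_le_iff.mpr ⟨by positivity, by exact_mod_cast factorial_le_doubleFactorial_sq n⟩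

theorem le_sqrt_factorial_mul_pow {f : ℕ → ℝ} {x t : ℝ} {N : ℕ} (hx : 0 ≤ x) (ht : 0 ≤ t)
    (hN : √N * t + x ≤ t ^ 2) (h0 : f 0 ≤ 1) (h1 : f 1 ≤ t)
    (hrec : ∀ n, f (n + 2) ≤ (n + 1) * (f (n + 1) + x * f n)) :
    ∀ n ≤ N, f n ≤ √(n ! : ℝ) * t ^ n := by
  intro n
  induction n using Nat.twoStepInduction with
  | zero => intro _; simpa using h0
  | one => intro _; simpa using h1
  | more n ih₀ ih₁ =>
    intro hn
    have hstep : √(n + 1 : ℝ) * t + x ≤ t ^ 2 :=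
      le_trans (by gcongr; exact_mod_cast (by omega : n + 1 ≤ N)) hN
    have hfac₁ : √((n + 1)! : ℝ) = √(n + 1 : ℝ) * √(n ! : ℝ) := by
      rw [factorial_succ, cast_mul, cast_succ, sqrt_mul (by positivity)]
    have hfac₂ : (n + 1 : ℝ) * √(n ! : ℝ) ≤ √((n + 2)! : ℝ) := by
      rw [le_sqrt (by positivity) (by positivity), mul_pow, sq_sqrt (by positivity),
        factorial_succ, factorial_succ]
      push_cast
      nlinarith [(by positivity : (0 : ℝ) ≤ n !)]
    calc f (n + 2) ≤ (n + 1) * (f (n + 1) + x * f n) := hrec n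
      _ ≤ (n + 1) * (√((n + 1)! : ℝ) * t ^ (n + 1) + x * (√(n ! : ℝ) * t ^ n)) := by
        gcongr
        exacts [ih₁ (by omega), ih₀ (by omega)]
      _ = (n + 1) * √(n ! : ℝ) * t ^ n * (√(n + 1 : ℝ) * t + x) := by rw [hfac₁]; ring
      _ ≤ (n + 1) * √(n ! : ℝ) * t ^ n * t ^ 2 := by gcongr
      _ ≤ √((n + 2)! : ℝ) * t ^ (n + 2) := by rw [pow_add, ← mul_assoc]; gcongr

theorem add_pow_le_pow_mul_exp {s a : ℝ} (hs : 0 < s) (hsa : 0 ≤ s + a) (n : ℕ) :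
    (s + a) ^ n ≤ s ^ n * exp (n * a / s) := by
  have hle : s + a ≤ s * exp (a / s) := by
    calc s + a = s * (a / s + 1) := by field_simp; ring
      _ ≤ s * exp (a / s) := by gcongr; exact add_one_le_exp _
  calc (s + a) ^ n ≤ (s * exp (a / s)) ^ n := pow_le_pow_left₀ hsa hle n
    _ = s ^ n * exp (n * a / s) := by rw [mul_pow, ← exp_nat_mul, mul_div_assoc]

theorem sqrt_add_sqrt_pow_le {ℓ : ℕ} {x : ℝ} (hx : (ℓ : ℝ) ^ ((3 : ℝ) / 2) ≤ x) :
    (√x + √ℓ) ^ ℓ ≤ exp ((ℓ : ℝ) ^ ((3 : ℝ) / 4)) * x ^ ((ℓ : ℝ) / 2) := by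
  rcases ℓ.eq_zero_or_pos with rfl | hℓ
  · simp
  have hℓ : (0 : ℝ) < ℓ := by exact_mod_cast hℓ
  have hx0 : 0 ≤ x := (by positivity : (0 : ℝ) ≤ _).trans hx
  have hsqrt : (ℓ : ℝ) ^ ((3 : ℝ) / 4) ≤ √x := by
    calc (ℓ : ℝ) ^ ((3 : ℝ) / 4) = √((ℓ : ℝ) ^ ((3 : ℝ) / 2)) := by
          rw [sqrt_eq_rpow, ← rpow_mul hℓ.le]; norm_num
      _ ≤ √x := sqrt_le_sqrt hx
  have hs : 0 < √x := (by positivity : (0 : ℝ) < _).trans_le hsqrt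
  have hpow : √x ^ ℓ = x ^ ((ℓ : ℝ) / 2) := by
    rw [sqrt_eq_rpow, ← rpow_natCast, ← rpow_mul hx0]; ring_nf
  have hexp : ℓ * √ℓ / √x ≤ (ℓ : ℝ) ^ ((3 : ℝ) / 4) := by
    rw [div_le_iff₀ hs]
    calc ℓ * √ℓ = (ℓ : ℝ) ^ ((3 : ℝ) / 4) * (ℓ : ℝ) ^ ((3 : ℝ) / 4) := by
          rw [← rpow_add hℓ, sqrt_eq_rpow, ← rpow_one_add' hℓ.le (by norm_num)]; norm_num
      _ ≤ (ℓ : ℝ) ^ ((3 : ℝ) / 4) * √x := by gcongr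
  calc (√x + √ℓ) ^ ℓ ≤ √x ^ ℓ * exp (ℓ * √ℓ / √x) := add_pow_le_pow_mul_exp hs (by positivity) ℓ
    _ ≤ x ^ ((ℓ : ℝ) / 2) * exp ((ℓ : ℝ) ^ ((3 : ℝ) / 4)) := by rw [hpow]; gcongr
    _ = exp ((ℓ : ℝ) ^ ((3 : ℝ) / 4)) * x ^ ((ℓ : ℝ) / 2) := mul_comm _ _

theorem sum_fixed_point_free_pow_le_general (ℓ : ℕ) (x : ℝ)
    (hx : 16 * (ℓ : ℝ) ^ ((3 : ℝ)/2) ≤ x) :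
    ∑ σ ∈ Finset.univ.filter (fun σ : Equiv.Perm (Fin ℓ) => ∀ i, σ i ≠ i),
      x ^ (cycleCount σ) ≤
      Real.exp ((ℓ : ℝ) ^ ((3 : ℝ)/4)) * (Nat.doubleFactorial ℓ) * x ^ ((ℓ : ℝ)/2) := by
  have hpos : 0 ≤ (ℓ : ℝ) ^ ((3 : ℝ) / 2) := by positivity
  have hℓx : (ℓ : ℝ) ^ ((3 : ℝ) / 2) ≤ x := by linarith
  have hx0 : 0 ≤ x := hpos.trans hℓx
  have hstep : √ℓ * (√x + √ℓ) + x ≤ (√x + √ℓ) ^ 2 := by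
    nlinarith [sq_sqrt hx0, sq_sqrt (cast_nonneg ℓ), mul_nonneg (sqrt_nonneg x) (sqrt_nonneg ℓ)]
  have hbound := le_sqrt_factorial_mul_pow (f := fun n => derangementCycleSum n x)
    (t := √x + √ℓ) hx0 (by positivity) hstep (derangementCycleSum_zero x).le
    (by rw [derangementCycleSum_one]; positivity) (fun n => (derangementCycleSum_add_two n x).le)
    ℓ le_rfl
  simp only [cycleCount_eq_numCycles]
  calc derangementCycleSum ℓ x ≤ √(ℓ ! : ℝ) * (√x + √ℓ) ^ ℓ := hbound
    _ ≤ ℓ‼ * (exp ((ℓ : ℝ) ^ ((3 : ℝ) / 4)) * x ^ ((ℓ : ℝ) / 2)) := by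
      gcongr
      exacts [sqrt_factorial_le_doubleFactorial ℓ, sqrt_add_sqrt_pow_le hℓx]
    _ = _ := by ring

theorem sum_fixed_point_free_pow_le (ℓ : ℕ) (hℓ : 1 ≤ ℓ) (x : ℝ)
    (hx : 16 * (ℓ : ℝ) ^ ((3 : ℝ)/2) ≤ x) :
    ∑ σ ∈ Finset.univ.filter (fun σ : Equiv.Perm (Fin ℓ) => ∀ i, σ i ≠ i),
      x ^ (cycleCount σ) ≤
      Real.exp ((ℓ : ℝ) ^ ((3 : ℝ)/4)) * (Nat.doubleFactorial ℓ) * x ^ ((ℓ : ℝ)/2) :=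
  sum_fixed_point_free_pow_le_general ℓ x hx
end

section
/- Suppose x ≥ 16ℓ^{3/2} is real and ℓ ≥ 1. Then Σ_{π} x^{|π|} ≤ exp(ℓ^{3/4})·ℓ!!·x^{ℓ/2}, where the sum is over set partitions π of {1,...,ℓ} all of whose blocks have size at least 2. -/
open scoped Classical

/-- `P` is a partition of the finite set `Fin n` into nonempty blocks. -/
def IsSetPartition {n : ℕ} (P : Finset (Finset (Fin n))) : Prop :=
  ∅ ∉ P ∧ ∀ i : Fin n, ∃! S, S ∈ P ∧ i ∈ S

/-!
Group the partitions by their number `k` of blocks. Removing the block that contains a fixed point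
and inducting on `k` (the binomial theorem closes the induction step) bounds the number of
partitions of an `n`-set into `k` blocks of size at least two by
`n! / (2 ^ k * k!) * k ^ (n - 2k) / (n - 2k)!`. Since `n! = n‼ * (n - 1)‼` and
`(n - 1)‼ ≤ 2 ^ k * k! * √n ^ (n - 2k)`, the `k`-th term of the sum is then at most
`n‼ * x ^ (n / 2) * y ^ (n - 2k) / (n - 2k)!` as soon as `√n * k ≤ √x * y`, which
`x ≥ 16 n ^ (3/2)` guarantees for `y = n ^ (3/4)`; and `∑ₖ y ^ (n - 2k) / (n - 2k)! ≤ exp y`.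
-/

open Finset Nat

section MinTwoPartitions

variable {α : Type*}

def IsMinTwoPartition (s : Finset α) (P : Finset (Finset α)) : Prop :=
  (∀ T ∈ P, T ⊆ s ∧ 2 ≤ #T) ∧ ∀ i ∈ s, ∃! T, T ∈ P ∧ i ∈ T

namespace IsMinTwoPartition

variable {s T T' : Finset α} {P : Finset (Finset α)}

theorem disjoint (h : IsMinTwoPartition s P) (hT : T ∈ P) (hT' : T' ∈ P) (hne : T ≠ T') :
    Disjoint T T' := by
  refine Finset.disjoint_left.2 fun i hi hi' => hne ?_
  obtain ⟨_, _, huniq⟩ := h.2 i ((h.1 T hT).1 hi)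
  exact (huniq T ⟨hT, hi⟩).trans (huniq T' ⟨hT', hi'⟩).symm

variable [DecidableEq α]

theorem biUnion_eq (h : IsMinTwoPartition s P) : P.biUnion id = s := by
  refine subset_antisymm (biUnion_subset.2 fun T hT => (h.1 T hT).1) fun i hi => ?_
  obtain ⟨T, ⟨hT, hiT⟩, -⟩ := h.2 i hi
  exact mem_biUnion.2 ⟨T, hT, hiT⟩

theorem card_eq_sum_card (h : IsMinTwoPartition s P) : #s = ∑ T ∈ P, #T := by
  conv_lhs => rw [← h.biUnion_eq]
  exact card_biUnion fun T hT T' hT' hne => h.disjoint hT hT' hne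

theorem two_mul_card_le (h : IsMinTwoPartition s P) : 2 * #P ≤ #s := by
  rw [h.card_eq_sum_card, mul_comm, ← smul_eq_mul, ← sum_const]
  exact sum_le_sum fun T hT => (h.1 T hT).2

theorem sdiff_erase (h : IsMinTwoPartition s P) (hT : T ∈ P) :
    IsMinTwoPartition (s \ T) (P.erase T) := by
  refine ⟨fun S hS => ?_, fun i hi => ?_⟩
  · obtain ⟨hST, hSP⟩ := mem_erase.1 hS
    refine ⟨fun i hiS => mem_sdiff.2 ⟨(h.1 S hSP).1 hiS, fun hiT => ?_⟩, (h.1 S hSP).2⟩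
    exact Finset.disjoint_left.1 (h.disjoint hSP hT hST) hiS hiT
  · obtain ⟨his, hiT⟩ := mem_sdiff.1 hi
    obtain ⟨S, ⟨hSP, hiS⟩, huniq⟩ := h.2 i his
    refine ⟨S, ⟨mem_erase.2 ⟨fun hST => hiT (hST ▸ hiS), hSP⟩, hiS⟩, ?_⟩
    exact fun S' ⟨hS', hiS'⟩ => huniq S' ⟨mem_of_mem_erase hS', hiS'⟩

end IsMinTwoPartition

noncomputable def minTwoPartitions (s : Finset α) (k : ℕ) : Finset (Finset (Finset α)) :=
  {P ∈ s.powerset.powerset | IsMinTwoPartition s P ∧ #P = k}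

variable {s : Finset α} {k : ℕ}

theorem mem_minTwoPartitions {P : Finset (Finset α)} :
    P ∈ minTwoPartitions s k ↔ IsMinTwoPartition s P ∧ #P = k := by
  refine mem_filter.trans (and_iff_right_of_imp fun h => ?_)
  exact mem_powerset.2 fun T hT => mem_powerset.2 (h.1.1 T hT).1

theorem card_minTwoPartitions_zero_le : #(minTwoPartitions s 0) ≤ 0 ^ #s := by
  rcases s.eq_empty_or_nonempty with rfl | ⟨i, hi⟩
  · refine (card_le_card fun P hP => ?_).trans (card_singleton (∅ : Finset (Finset α))).le
    exact mem_singleton.2 (card_eq_zero.1 (mem_minTwoPartitions.1 hP).2)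
  · refine (card_eq_zero.2 (eq_empty_of_forall_notMem fun P hP => ?_)).trans_le (zero_le _)
    obtain ⟨h, hP⟩ := mem_minTwoPartitions.1 hP
    obtain ⟨T, ⟨hT, -⟩, -⟩ := h.2 i hi
    exact notMem_empty T (card_eq_zero.1 hP ▸ hT)

variable [DecidableEq α]

theorem minTwoPartitions_eq_empty (h : #s < 2 * k) : minTwoPartitions s k = ∅ :=
  eq_empty_of_forall_notMem fun P hP => by
    obtain ⟨hPs, rfl⟩ := mem_minTwoPartitions.1 hP
    exact h.not_ge hPs.two_mul_card_le

theorem card_filter_mem_minTwoPartitions_le (T : Finset α) :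
    #{P ∈ minTwoPartitions s (k + 1) | T ∈ P} ≤ #(minTwoPartitions (s \ T) k) := by
  refine card_le_card_of_injOn (·.erase T) (fun P hP => ?_) fun P hP P' hP' hPP' => ?_
  · obtain ⟨hP, hTP⟩ := mem_filter.1 hP
    obtain ⟨h, hcard⟩ := mem_minTwoPartitions.1 hP
    exact mem_minTwoPartitions.2 ⟨h.sdiff_erase hTP, by rw [card_erase_of_mem hTP, hcard]; rfl⟩
  · rw [← insert_erase (mem_filter.1 hP).2, ← insert_erase (mem_filter.1 hP').2]
    exact congrArg (insert T) hPP'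

theorem card_minTwoPartitions_insert_le (a : α) (t : Finset α) (k : ℕ) :
    #(minTwoPartitions (insert a t) k) ≤
      ∑ U ∈ t.powerset, #{P ∈ minTwoPartitions (insert a t) k | insert a U ∈ P} := by
  refine (card_le_card fun P hP => ?_).trans card_biUnion_le
  obtain ⟨h, -⟩ := mem_minTwoPartitions.1 hP
  obtain ⟨T, ⟨hT, haT⟩, -⟩ := h.2 a (mem_insert_self a t)
  refine mem_biUnion.2 ⟨T.erase a, mem_powerset.2 ?_, mem_filter.2 ⟨hP, ?_⟩⟩
  · exact (erase_subset_erase a (h.1 T hT).1).trans (erase_insert_subset a t)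
  · rwa [insert_erase haT]

theorem card_minTwoPartitions_insert_succ_le {a : α} {t : Finset α} (hat : a ∉ t) (k : ℕ) :
    #(minTwoPartitions (insert a t) (k + 1)) ≤
      ∑ U ∈ t.powerset, if #U = 0 then 0 else #(minTwoPartitions (t \ U) k) := by
  refine (card_minTwoPartitions_insert_le a t (k + 1)).trans (sum_le_sum fun U _ => ?_)
  split_ifs with hU
  · refine (card_eq_zero.2 (filter_false_of_mem fun P hP haP => ?_)).le
    simpa [card_eq_zero.1 hU] using ((mem_minTwoPartitions.1 hP).1.1 _ haP).2
  · rw [← sdiff_insert_of_notMem hat, ← insert_sdiff_insert]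
    exact card_filter_mem_minTwoPartitions_le _

end MinTwoPartitions

-- The number of ways to choose `k` disjoint pairs among `n` points and to attach each of the
-- remaining `n - 2k` points to one of the pairs.
noncomputable def partitionBound (n k : ℕ) : ℝ :=
  if 2 * k ≤ n then n ! / (2 ^ k * k !) * (k ^ (n - 2 * k) / (n - 2 * k)!) else 0

theorem partitionBound_nonneg (n k : ℕ) : 0 ≤ partitionBound n k := by
  unfold partitionBound
  split_ifs <;> positivity

theorem partitionBound_zero_right (n : ℕ) : partitionBound n 0 = 0 ^ n := by
  rw [partitionBound, if_pos (zero_le n)]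
  simp only [mul_zero, pow_zero, factorial_zero, cast_one, mul_one, div_one, Nat.sub_zero,
    CharP.cast_eq_zero]
  exact mul_div_cancel₀ _ (by positivity)

theorem add_pow_div_factorial {K : Type*} [Field K] [CharZero K] (x y : K) (r : ℕ) :
    (x + y) ^ r / r ! = ∑ i ∈ range (r + 1), x ^ i / i ! * (y ^ (r - i) / (r - i)!) := by
  rw [add_pow, sum_div]
  refine sum_congr rfl fun i hi => ?_
  have : (r ! : K) ≠ 0 := Nat.cast_ne_zero.2 (factorial_ne_zero r)
  rw [cast_choose K (Nat.lt_succ_iff.1 (mem_range.1 hi))]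
  field_simp

theorem choose_succ_mul_factorial_le {n i : ℕ} (h : i + 1 ≤ n) :
    (n.choose (i + 1) * (n - (i + 1))! : ℝ) ≤ n ! / i ! := by
  have hfac : (n.choose (i + 1) * (n - (i + 1))! * (i + 1)! : ℝ) = n ! := by
    rw [mul_right_comm]
    exact_mod_cast choose_mul_factorial_mul_factorial h
  rw [le_div_iff₀ (by positivity), ← hfac]
  gcongr
  omega

theorem choose_succ_mul_partitionBound_le {r k i : ℕ} (hi : i ≤ r) :
    ((r + 1 + 2 * k).choose (i + 1) : ℝ) * partitionBound (r + 1 + 2 * k - (i + 1)) k ≤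
      (r + 1 + 2 * k)! / (2 ^ k * k !) * (1 ^ i / i ! * (k ^ (r - i) / (r - i)!)) := by
  set n := r + 1 + 2 * k
  rw [partitionBound, if_pos (by omega), show n - (i + 1) - 2 * k = r - i by omega, one_pow]
  calc (n.choose (i + 1) : ℝ) * ((n - (i + 1))! / (2 ^ k * k !) * (k ^ (r - i) / (r - i)!))
      = n.choose (i + 1) * (n - (i + 1))! / (2 ^ k * k !) * (k ^ (r - i) / (r - i)!) := by ring
    _ ≤ n ! / i ! / (2 ^ k * k !) * (k ^ (r - i) / (r - i)!) := by
      gcongr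
      exact choose_succ_mul_factorial_le (by omega)
    _ = _ := by ring

theorem factorial_div_le_factorial_succ_div {n k : ℕ} (h : 2 * (k + 1) ≤ n + 1) :
    (n ! / (2 ^ k * k !) : ℝ) ≤ (n + 1)! / (2 ^ (k + 1) * (k + 1)!) := by
  have h' : (2 * (k + 1) : ℝ) ≤ n + 1 := by exact_mod_cast h
  rw [div_le_div_iff₀ (by positivity) (by positivity), factorial_succ, factorial_succ, pow_succ]
  push_cast
  have : (0 : ℝ) ≤ n ! * (2 ^ k * k !) := by positivity
  nlinarith

theorem sum_choose_mul_partitionBound_le (n k : ℕ) :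
    ∑ i ∈ range n, (n.choose (i + 1) : ℝ) * partitionBound (n - (i + 1)) k ≤
      partitionBound (n + 1) (k + 1) := by
  by_cases hn : 2 * k + 1 ≤ n
  swap
  · rw [sum_eq_zero fun i hi => by
      rw [partitionBound, if_neg (by rw [mem_range] at hi; omega), mul_zero]]
    exact partitionBound_nonneg _ _
  obtain ⟨r, rfl⟩ : ∃ r, n = r + 1 + 2 * k := ⟨n - (2 * k + 1), by omega⟩
  rw [sum_range_add, add_eq_left.2 (sum_eq_zero fun i hi => by
    rw [partitionBound, if_neg (by rw [mem_range] at hi; omega), mul_zero])]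
  calc ∑ i ∈ range (r + 1), ((r + 1 + 2 * k).choose (i + 1) : ℝ) *
          partitionBound (r + 1 + 2 * k - (i + 1)) k
      ≤ ∑ i ∈ range (r + 1),
          ((r + 1 + 2 * k)! / (2 ^ k * k !) * (1 ^ i / i ! * (k ^ (r - i) / (r - i)!)) : ℝ) :=
        sum_le_sum fun i hi =>
          choose_succ_mul_partitionBound_le (Nat.lt_succ_iff.1 (mem_range.1 hi))
    _ = (r + 1 + 2 * k)! / (2 ^ k * k !) * (((k : ℝ) + 1) ^ r / r !) := by
        rw [← mul_sum, ← add_pow_div_factorial, add_comm (1 : ℝ)]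
    _ ≤ partitionBound (r + 1 + 2 * k + 1) (k + 1) := by
        rw [partitionBound, if_pos (by omega), show r + 1 + 2 * k + 1 - 2 * (k + 1) = r by omega]
        push_cast
        gcongr ?_ * _
        exact_mod_cast factorial_div_le_factorial_succ_div (by omega)

theorem card_minTwoPartitions_le {α : Type*} [DecidableEq α] (s : Finset α) (k : ℕ) :
    (#(minTwoPartitions s k) : ℝ) ≤ partitionBound #s k := by
  induction k generalizing s with
  | zero =>
    rw [partitionBound_zero_right]
    exact_mod_cast card_minTwoPartitions_zero_le
  | succ k ih =>
    rcases s.eq_empty_or_nonempty with rfl | ⟨a, ha⟩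
    · rw [minTwoPartitions_eq_empty (by simp), card_empty, cast_zero]
      exact partitionBound_nonneg _ _
    obtain ⟨t, hat, rfl⟩ : ∃ t, a ∉ t ∧ s = insert a t :=
      ⟨s.erase a, notMem_erase a s, (insert_erase ha).symm⟩
    calc (#(minTwoPartitions (insert a t) (k + 1)) : ℝ)
        ≤ ∑ U ∈ t.powerset, ((if #U = 0 then 0 else #(minTwoPartitions (t \ U) k) : ℕ) : ℝ) := by
          exact_mod_cast card_minTwoPartitions_insert_succ_le hat k
      _ ≤ ∑ U ∈ t.powerset, if #U = 0 then 0 else partitionBound (#t - #U) k := by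
          refine sum_le_sum fun U hU => ?_
          split_ifs
          · rw [cast_zero]
          · rw [← card_sdiff_of_subset (mem_powerset.1 hU)]
            exact ih _
      _ = ∑ i ∈ range #t, ((#t).choose (i + 1) : ℝ) * partitionBound (#t - (i + 1)) k := by
          rw [sum_powerset_apply_card fun m => if m = 0 then 0 else partitionBound (#t - m) k,
            sum_range_succ']
          simp [nsmul_eq_mul]
      _ ≤ partitionBound #(insert a t) (k + 1) := by
          rw [card_insert_of_notMem hat]
          exact sum_choose_mul_partitionBound_le _ _

theorem doubleFactorial_le_doubleFactorial_succ : ∀ n : ℕ, n‼ ≤ (n + 1)‼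
  | 0 => le_rfl
  | 1 => by decide
  | n + 2 => Nat.mul_le_mul (by omega) (doubleFactorial_le_doubleFactorial_succ n)

theorem factorial_eq_doubleFactorial_mul_doubleFactorial_sub_one : ∀ n : ℕ, n ! = n‼ * (n - 1)‼
  | 0 => rfl
  | n + 1 => factorial_eq_mul_doubleFactorial n

-- Squared, so that no half-integer power of `2 * k + r` appears when `r` is odd.
theorem sq_doubleFactorial_sub_one_le (k : ℕ) :
    ∀ r : ℕ, ((2 * k + r - 1)‼) ^ 2 ≤ ((2 * k)‼) ^ 2 * (2 * k + r) ^ r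
  | 0 => by
    rw [add_zero, pow_zero, mul_one]
    rcases k with _ | k
    · rfl
    exact Nat.pow_le_pow_left (doubleFactorial_le_doubleFactorial_succ (2 * k + 1)) 2
  | 1 => by
    rw [Nat.add_sub_cancel, pow_one]
    exact Nat.le_mul_of_pos_right _ (by omega)
  | r + 2 => by
    rcases Nat.eq_zero_or_pos (2 * k + r) with h | h
    · obtain ⟨rfl, rfl⟩ : k = 0 ∧ r = 0 := by omega
      decide
    rw [show 2 * k + (r + 2) - 1 = 2 * k + r - 1 + 2 by omega, doubleFactorial_add_two, mul_pow]
    calc (2 * k + r - 1 + 2) ^ 2 * ((2 * k + r - 1)‼) ^ 2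
        ≤ (2 * k + (r + 2)) ^ 2 * (((2 * k)‼) ^ 2 * (2 * k + r) ^ r) :=
          Nat.mul_le_mul (Nat.pow_le_pow_left (by omega) 2) (sq_doubleFactorial_sub_one_le k r)
      _ ≤ (2 * k + (r + 2)) ^ 2 * (((2 * k)‼) ^ 2 * (2 * k + (r + 2)) ^ r) := by
          gcongr
          omega
      _ = ((2 * k)‼) ^ 2 * (2 * k + (r + 2)) ^ (r + 2) := by ring

theorem partitionBound_mul_sq_pow_le {n k : ℕ} (hk : 2 * k ≤ n) {b c y : ℝ} (hb : 0 ≤ b)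
    (hb2 : b ^ 2 = n) (hc : 0 ≤ c) (hbc : b * k ≤ c * y) :
    partitionBound n k * (c ^ 2) ^ k ≤ n‼ * c ^ n * (y ^ (n - 2 * k) / (n - 2 * k)!) := by
  obtain ⟨r, rfl⟩ : ∃ r, n = 2 * k + r := ⟨n - 2 * k, by omega⟩
  rw [partitionBound, if_pos hk, Nat.add_sub_cancel_left]
  have hdf : ((2 * k + r - 1)‼ : ℝ) ≤ 2 ^ k * k ! * b ^ r := by
    rw [← pow_le_pow_iff_left₀ (by positivity) (by positivity) two_ne_zero]
    calc ((2 * k + r - 1)‼ : ℝ) ^ 2 ≤ (((2 * k)‼) ^ 2 * (2 * k + r) ^ r : ℕ) := by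
          exact_mod_cast sq_doubleFactorial_sub_one_le k r
      _ = (2 ^ k * k ! * b ^ r) ^ 2 := by
          rw [doubleFactorial_two_mul]
          push_cast at hb2 ⊢
          rw [← hb2]
          ring
  have hfac : ((2 * k + r)! : ℝ) = (2 * k + r)‼ * (2 * k + r - 1)‼ := by
    exact_mod_cast factorial_eq_doubleFactorial_mul_doubleFactorial_sub_one _
  calc (2 * k + r)! / (2 ^ k * k !) * (k ^ r / r !) * (c ^ 2) ^ k
      = (2 * k + r)‼ * (2 * k + r - 1)‼ / (2 ^ k * k !) * (k ^ r / r !) * (c ^ 2) ^ k := by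
        rw [hfac]
    _ ≤ (2 * k + r)‼ * (2 ^ k * k ! * b ^ r) / (2 ^ k * k !) * (k ^ r / r !) * (c ^ 2) ^ k := by
        gcongr
    _ = (2 * k + r)‼ * (b * k) ^ r / r ! * c ^ (2 * k) := by
        field_simp
        ring
    _ ≤ (2 * k + r)‼ * (c * y) ^ r / r ! * c ^ (2 * k) := by
        gcongr
    _ = (2 * k + r)‼ * c ^ (2 * k + r) * (y ^ r / r !) := by ring

theorem sum_pow_sub_two_mul_div_factorial_le_exp (n : ℕ) {y : ℝ} (hy : 0 ≤ y) :
    ∑ k ∈ range (n / 2 + 1), y ^ (n - 2 * k) / (n - 2 * k)! ≤ Real.exp y := by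
  have hinj : Set.InjOn (fun k => n - 2 * k) (range (n / 2 + 1)) := by
    intro i hi j hj h
    simp only [coe_range, Set.mem_Iio] at hi hj h
    omega
  rw [← sum_image (f := fun m => y ^ m / m !) hinj]
  refine (sum_le_sum_of_subset_of_nonneg (fun m hm => ?_) fun _ _ _ => by positivity).trans
    (Real.sum_le_exp_of_nonneg hy (n + 1))
  obtain ⟨k, -, rfl⟩ := mem_image.1 hm
  exact mem_range.2 (by omega)

theorem sum_partitionBound_mul_sq_pow_le {n : ℕ} {b c y : ℝ} (hb : 0 ≤ b) (hb2 : b ^ 2 = n)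
    (hc : 0 ≤ c) (hy : 0 ≤ y) (hbc : b * n ≤ 2 * (c * y)) :
    ∑ k ∈ range (n / 2 + 1), partitionBound n k * (c ^ 2) ^ k ≤ n‼ * c ^ n * Real.exp y := by
  calc ∑ k ∈ range (n / 2 + 1), partitionBound n k * (c ^ 2) ^ k
      ≤ ∑ k ∈ range (n / 2 + 1), n‼ * c ^ n * (y ^ (n - 2 * k) / (n - 2 * k)!) :=
        sum_le_sum fun k hk => by
          have hk : 2 * k ≤ n := by rw [mem_range] at hk; omega
          have hk' : (2 * k : ℝ) ≤ n := by exact_mod_cast hk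
          exact partitionBound_mul_sq_pow_le hk hb hb2 hc (by nlinarith)
    _ ≤ n‼ * c ^ n * Real.exp y := by
        rw [← mul_sum]
        gcongr
        exact sum_pow_sub_two_mul_div_factorial_le_exp n hy

theorem sqrt_mul_self_le_two_mul_sqrt_mul_rpow {ℓ x : ℝ} (hℓ : 0 ≤ ℓ)
    (hx : 16 * ℓ ^ (3 / 2 : ℝ) ≤ x) : √ℓ * ℓ ≤ 2 * (√x * ℓ ^ (3 / 4 : ℝ)) := by
  set t := ℓ ^ (3 / 4 : ℝ)
  have ht : 0 ≤ t := by positivity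
  have ht2 : t ^ 2 = ℓ ^ (3 / 2 : ℝ) := by
    rw [← Real.rpow_natCast, ← Real.rpow_mul hℓ]
    norm_num
  have hsqrt_mul : √ℓ * ℓ = ℓ ^ (3 / 2 : ℝ) := by
    rw [Real.sqrt_eq_rpow, show (3 / 2 : ℝ) = 1 / 2 + 1 by norm_num,
      Real.rpow_add' hℓ (by norm_num), Real.rpow_one]
  have hsqrt : 4 * t ≤ √x := by
    rw [Real.le_sqrt (by positivity) ((by positivity : (0 : ℝ) ≤ 16 * ℓ ^ (3 / 2 : ℝ)).trans hx),
      mul_pow, ht2]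
    linarith
  nlinarith

theorem isSetPartition_and_two_le_card_iff {n : ℕ} {P : Finset (Finset (Fin n))} :
    IsSetPartition P ∧ (∀ S ∈ P, 2 ≤ #S) ↔ IsMinTwoPartition univ P := by
  refine ⟨fun ⟨⟨_, hcov⟩, hcard⟩ => ⟨fun T hT => ⟨subset_univ T, hcard T hT⟩, fun i _ => hcov i⟩,
    fun h => ⟨⟨fun h0 => ?_, fun i => h.2 i (mem_univ i)⟩, fun T hT => (h.1 T hT).2⟩⟩
  simpa using (h.1 ∅ h0).2

theorem sum_filter_isSetPartition_pow_card (n : ℕ) (x : ℝ) :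
    ∑ P ∈ univ.filter
        (fun P : Finset (Finset (Fin n)) => IsSetPartition P ∧ ∀ S ∈ P, 2 ≤ S.card), x ^ P.card =
      ∑ k ∈ range (n / 2 + 1), (#(minTwoPartitions (univ : Finset (Fin n)) k) : ℝ) * x ^ k := by
  rw [← sum_fiberwise_of_maps_to (g := card) (t := range (n / 2 + 1)) fun P hP => ?_]
  · refine sum_congr rfl fun k _ => ?_
    rw [sum_congr rfl fun P hP => by rw [(mem_filter.1 hP).2], sum_const, nsmul_eq_mul,
      filter_filter]
    congr 3
    ext P
    simp [mem_minTwoPartitions, isSetPartition_and_two_le_card_iff]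
  · have := (isSetPartition_and_two_le_card_iff.1 (mem_filter.1 hP).2).two_mul_card_le
    rw [Finset.card_fin] at this
    exact mem_range.2 (by omega)

theorem sum_partitions_min_two_pow_le_general (ℓ : ℕ) (x : ℝ)
    (hx : 16 * (ℓ : ℝ) ^ ((3 : ℝ)/2) ≤ x) :
    ∑ P ∈ Finset.univ.filter
        (fun P : Finset (Finset (Fin ℓ)) => IsSetPartition P ∧ ∀ S ∈ P, 2 ≤ S.card),
      x ^ P.card ≤
      Real.exp ((ℓ : ℝ) ^ ((3 : ℝ)/4)) * (Nat.doubleFactorial ℓ) * x ^ ((ℓ : ℝ)/2) := by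
  have hx0 : 0 ≤ x := (by positivity : (0 : ℝ) ≤ 16 * (ℓ : ℝ) ^ ((3 : ℝ) / 2)).trans hx
  calc _ = ∑ k ∈ range (ℓ / 2 + 1),
          (#(minTwoPartitions (univ : Finset (Fin ℓ)) k) : ℝ) * (√x ^ 2) ^ k := by
        rw [sum_filter_isSetPartition_pow_card, Real.sq_sqrt hx0]
    _ ≤ ∑ k ∈ range (ℓ / 2 + 1), partitionBound ℓ k * (√x ^ 2) ^ k := by
        gcongr with k
        simpa only [Finset.card_fin] using card_minTwoPartitions_le (univ : Finset (Fin ℓ)) k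
    _ ≤ ℓ‼ * √x ^ ℓ * Real.exp ((ℓ : ℝ) ^ ((3 : ℝ) / 4)) :=
        sum_partitionBound_mul_sq_pow_le (Real.sqrt_nonneg _) (Real.sq_sqrt (cast_nonneg ℓ))
          (Real.sqrt_nonneg x) (by positivity)
          (sqrt_mul_self_le_two_mul_sqrt_mul_rpow (cast_nonneg ℓ) hx)
    _ = _ := by
        rw [Real.rpow_div_two_eq_sqrt _ hx0, Real.rpow_natCast]
        ring

theorem sum_partitions_min_two_pow_le (ℓ : ℕ) (hℓ : 1 ≤ ℓ) (x : ℝ)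
    (hx : 16 * (ℓ : ℝ) ^ ((3 : ℝ)/2) ≤ x) :
    ∑ P ∈ Finset.univ.filter
        (fun P : Finset (Finset (Fin ℓ)) => IsSetPartition P ∧ ∀ S ∈ P, 2 ≤ S.card),
      x ^ P.card ≤
      Real.exp ((ℓ : ℝ) ^ ((3 : ℝ)/4)) * (Nat.doubleFactorial ℓ) * x ^ ((ℓ : ℝ)/2) :=
  sum_partitions_min_two_pow_le_general ℓ x hx
end

section
/- For any permutation σ ∈ S_k and real x > 2k², Σ_{ρ} x^{-|σρ⁻¹|} ≤ 2·((k-1)!/(k - c(σ) + 1)!)·k^{c(σ)}·x^{-c(σ)+1}, where the sum is over all k-cycles ρ ∈ S_k, |·| is the Cayley weight, and c(σ) is the number of cycles of σ. -/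
open scoped Classical

/-- The Cayley weight of a permutation: the minimum number of transpositions whose
product equals `σ`. -/
noncomputable def cayleyWeight {k : ℕ} (σ : Equiv.Perm (Fin k)) : ℕ :=
  sInf {m | ∃ l : List (Equiv.Perm (Fin k)),
    l.length = m ∧ (∀ τ ∈ l, τ.IsSwap) ∧ l.prod = σ}

/-!
Write `|π| = k - c(π)`: one transposition changes the number of cycles by at most one, and a
cycle of length `m` is a product of `m - 1` transpositions. Since `ρ` is a `k`-cycle, the
factorisation `σ = (σ ρ⁻¹) ρ` forces `|σ ρ⁻¹| ≥ c(σ) - 1 =: e`, so the sum is dominated by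
`∑_{|π| ≥ e} x^{-|π|}`.

A permutation `π` is determined by the set of points that are not the smallest element of their
cycle (a set of size `|π|`) together with the values of `π` on that set, so at most
`C(k, d) k^d` permutations have weight `d`. Consecutive terms of `∑_{d ≥ e} C(k, d) (k / x)^d`
shrink by a factor `k² / x < 1 / 2`, so this sum is at most twice its first term, and
`C(k, e) ≤ k! / (k - e)!` gives the stated bound.
-/

open Finset Equiv

theorem List.isSwap_of_mem_zipWith_swap {α : Type*} [DecidableEq α] {l : List α} (hl : l.Nodup) :
    ∀ τ ∈ List.zipWith Equiv.swap l l.tail, τ.IsSwap := by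
  induction l with
  | nil => simp
  | cons x l ih =>
    cases l with
    | nil => simp
    | cons y l =>
      simp only [List.tail_cons, List.zipWith_cons_cons, List.mem_cons]
      rintro τ (rfl | hτ)
      · exact ⟨x, y, fun h => (List.nodup_cons.1 hl).1 (h ▸ List.mem_cons_self), rfl⟩
      · exact ih hl.of_cons τ hτ

namespace Equiv.Perm

section SameCycle

variable {α : Type*} {f g : Perm α} {x y : α}

theorem SameCycle.eq_of_invariant {β : Type*} {φ : α → β} (hφ : ∀ z, φ (f z) = φ z)
    (h : f.SameCycle x y) : φ x = φ y := by
  obtain ⟨i, rfl⟩ := h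
  induction i using Int.induction_on with
  | zero => rfl
  | succ i ih => rw [add_comm, zpow_add, zpow_one, mul_apply, hφ, ih]
  | pred i ih =>
    rw [sub_eq_neg_add, zpow_add, zpow_neg_one, mul_apply, ih, ← hφ (f⁻¹ _), coe_inv,
      apply_symm_apply]

theorem SameCycle.of_forall_apply_eq [Finite α] (hxy : f.SameCycle x y)
    (h : ∀ z, f.SameCycle x z → z ≠ y → g z = f z) : g.SameCycle x y := by
  by_contra hg
  have hpow : ∀ n : ℕ, (g ^ n) x = (f ^ n) x := by
    intro n
    induction n with
    | zero => rfl
    | succ n ih =>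
      have hy : (f ^ n) x ≠ y := fun hn => hg ⟨n, by rw [zpow_natCast, ih, hn]⟩
      rw [pow_succ', mul_apply, ih, h _ ⟨n, by simp⟩ hy, ← mul_apply, ← pow_succ']
  obtain ⟨n, -, hn⟩ := hxy.exists_pow_eq'
  exact hg ⟨n, by rw [zpow_natCast, hpow, hn]⟩

end SameCycle

section Swaps

variable {α : Type*} [Fintype α] [DecidableEq α]

theorem card_cycleType_le_card_support (f : Perm α) : Multiset.card f.cycleType ≤ #f.support := by
  simpa [sum_cycleType] using
    Multiset.card_nsmul_le_sum fun _ h => one_le_two.trans (two_le_of_mem_cycleType (σ := f) h)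

theorem IsCycle.exists_isSwap_list {γ : Perm α} (hγ : γ.IsCycle) :
    ∃ l : List (Perm α), (∀ τ ∈ l, τ.IsSwap) ∧ l.prod = γ ∧ l.length = #γ.support - 1 := by
  obtain ⟨x, hx, -⟩ := id hγ
  refine ⟨List.zipWith swap (γ.toList x) (γ.toList x).tail,
    List.isSwap_of_mem_zipWith_swap (nodup_toList γ x), ?_, ?_⟩
  · rw [← List.formPerm, formPerm_toList, hγ.cycleOf_eq hx]
  · simp [length_toList, hγ.cycleOf_eq hx]

theorem exists_isSwap_list (f : Perm α) :
    ∃ l : List (Perm α), (∀ τ ∈ l, τ.IsSwap) ∧ l.prod = f ∧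
      l.length = #f.support - Multiset.card f.cycleType := by
  induction f using cycle_induction_on with
  | base_one => exact ⟨[], by simp, by simp, by simp⟩
  | base_cycles γ hγ =>
    rw [card_cycleType_eq_one.2 hγ]
    exact hγ.exists_isSwap_list
  | induction_disjoint f g hfg _ ihf ihg =>
    obtain ⟨l₁, hl₁, rfl, h₁⟩ := ihf
    obtain ⟨l₂, hl₂, rfl, h₂⟩ := ihg
    refine ⟨l₁ ++ l₂, fun τ hτ => (List.mem_append.1 hτ).elim (hl₁ τ) (hl₂ τ),
      List.prod_append, ?_⟩
    rw [List.length_append, h₁, h₂, hfg.card_support_mul, hfg.cycleType_mul, Multiset.card_add]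
    have := card_cycleType_le_card_support l₁.prod
    have := card_cycleType_le_card_support l₂.prod
    omega

theorem card_quotient_sameCycle_le_swap_mul (f : Perm α) (a b : α) :
    Fintype.card (Quotient (SameCycle.setoid f)) ≤
      Fintype.card (Quotient (SameCycle.setoid (swap a b * f))) + 1 := by
  -- Gluing the `f`-cycles of `a` and `b` gives a partition that is invariant under
  -- `swap a b * f`, hence coarser than its cycle partition.
  let glue : Quotient (SameCycle.setoid f) → Quotient (SameCycle.setoid f) :=
    fun q => if q = ⟦b⟧ then ⟦a⟧ else q
  have hglue : ∀ x, glue ⟦(swap a b * f) x⟧ = glue ⟦x⟧ := by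
    intro x
    have hfx : (⟦f x⟧ : Quotient (SameCycle.setoid f)) = ⟦x⟧ :=
      Quotient.sound (SameCycle.refl f x).apply_left
    rw [mul_apply, swap_apply_def]
    split_ifs <;> simp_all [glue]
  let G : Option (Quotient (SameCycle.setoid (swap a b * f))) → Quotient (SameCycle.setoid f) :=
    fun o => o.elim ⟦b⟧ (Quotient.lift (fun x => glue ⟦x⟧)
      fun _ _ h => SameCycle.eq_of_invariant (φ := fun x => glue ⟦x⟧) hglue h)
  have hG : Function.Surjective G := by
    rintro ⟨x⟩
    by_cases hx : (⟦x⟧ : Quotient (SameCycle.setoid f)) = ⟦b⟧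
    · exact ⟨none, hx.symm⟩
    · exact ⟨some ⟦x⟧, if_neg hx⟩
  simpa using Fintype.card_le_of_surjective G hG

end Swaps

section Minima

variable {α : Type*} [Fintype α] [LinearOrder α]

def cycleMinima (f : Perm α) : Finset α := {x | ∀ y, f.SameCycle x y → x ≤ y}

variable {f g : Perm α} {x y : α}

theorem mem_cycleMinima : x ∈ cycleMinima f ↔ ∀ y, f.SameCycle x y → x ≤ y := by
  simp [cycleMinima]

theorem eq_of_mem_cycleMinima (hx : x ∈ cycleMinima f) (hy : y ∈ cycleMinima f)
    (h : f.SameCycle x y) : x = y :=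
  le_antisymm (mem_cycleMinima.1 hx y h) (mem_cycleMinima.1 hy x h.symm)

theorem mem_cycleMinima_of_apply_eq_self (hx : f x = x) : x ∈ cycleMinima f :=
  mem_cycleMinima.2 fun _ h => (h.eq_of_left hx).le

theorem exists_mem_cycleMinima_sameCycle (f : Perm α) (x : α) :
    ∃ m ∈ cycleMinima f, f.SameCycle x m := by
  have hne : ({y | f.SameCycle x y} : Finset α).Nonempty := ⟨x, by simpa using SameCycle.refl f x⟩
  have hmin := min'_mem _ hne
  simp only [mem_filter, mem_univ, true_and] at hmin
  refine ⟨_, mem_cycleMinima.2 fun y hy => min'_le _ _ ?_, hmin⟩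
  simpa using hmin.trans hy

theorem card_cycleMinima_eq_card_quotient (f : Perm α) :
    #(cycleMinima f) = Fintype.card (Quotient (SameCycle.setoid f)) := by
  rw [← Fintype.card_coe]
  refine Fintype.card_of_bijective (f := fun m : cycleMinima f => ⟦(m : α)⟧) ⟨?_, ?_⟩
  · rintro ⟨x, hx⟩ ⟨y, hy⟩ h
    exact Subtype.ext (eq_of_mem_cycleMinima hx hy (Quotient.exact h))
  · rintro ⟨x⟩
    obtain ⟨m, hm, hxm⟩ := exists_mem_cycleMinima_sameCycle f x
    exact ⟨⟨m, hm⟩, Quotient.sound hxm.symm⟩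

theorem card_cycleMinima_inter_support (f : Perm α) :
    #(cycleMinima f ∩ f.support) = #f.cycleFactorsFinset := by
  refine card_nbij f.cycleOf
    (fun x hx => cycleOf_mem_cycleFactorsFinset_iff.2 (mem_inter.1 hx).2) ?_ ?_
  · intro x hx y hy h
    simp only [coe_inter, Set.mem_inter_iff, Finset.mem_coe] at hx hy
    refine eq_of_mem_cycleMinima hx.1 hy.1 (mem_support_cycleOf_iff.1 ?_).1
    exact h ▸ mem_support_cycleOf_iff.2 ⟨SameCycle.refl f y, hy.2⟩
  · intro c hc
    have hne := (mem_cycleFactorsFinset_iff.1 hc).1.nonempty_support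
    have hm := min'_mem _ hne
    have hcm := cycle_is_cycleOf hm hc
    have hm_supp := mem_cycleFactorsFinset_support_le hc hm
    refine ⟨c.support.min' hne, mem_inter.2 ⟨mem_cycleMinima.2 fun y hy => ?_, hm_supp⟩, hcm.symm⟩
    exact min'_le _ _ (hcm ▸ mem_support_cycleOf_iff.2 ⟨hy, hm_supp⟩)

theorem card_cycleMinima (f : Perm α) :
    #(cycleMinima f) = Multiset.card f.cycleType + (Fintype.card α - #f.support) := by
  have hfix : cycleMinima f \ f.support = f.supportᶜ := by
    ext x
    simp only [mem_sdiff, mem_compl, and_iff_right_iff_imp]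
    exact fun hx => mem_cycleMinima_of_apply_eq_self (notMem_support.1 hx)
  rw [← card_inter_add_card_sdiff (cycleMinima f) f.support, card_cycleMinima_inter_support, hfix,
    card_compl, cycleType_def, Multiset.card_map]
  rfl

theorem eq_of_cycleMinima_eq (hM : cycleMinima f = cycleMinima g)
    (h : ∀ x ∉ cycleMinima f, f x = g x) : f = g := by
  ext m
  by_cases hm : m ∈ cycleMinima f
  swap
  · exact h m hm
  have hfm : g.SameCycle (f m) m := by
    refine SameCycle.of_forall_apply_eq (SameCycle.refl f m).apply_left fun z hz hzm => ?_
    refine (h z fun hzM => hzm ?_).symm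
    exact eq_of_mem_cycleMinima hzM hm (hz.symm.trans (SameCycle.refl f m).apply_left)
  -- `g⁻¹ (f m)` lies in the `g`-cycle of `m` and is not a non-minimum (where `g = f`),
  -- so it is `m`.
  set z := g⁻¹ (f m)
  have hgz : g z = f m := by simp [z]
  have hzm : z = m := by
    by_cases hzM : z ∈ cycleMinima f
    · rw [hM] at hzM hm
      exact eq_of_mem_cycleMinima hzM hm ((SameCycle.refl g z).apply_right.trans (hgz ▸ hfm))
    · exact f.injective (h z hzM ▸ hgz)
  rw [← hgz, hzm]

def eraseCycleMinima (f : Perm α) (x : α) : α := if x ∈ cycleMinima f then x else f x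

theorem eraseCycleMinima_eq_self_iff : eraseCycleMinima f x = x ↔ x ∈ cycleMinima f := by
  by_cases hx : x ∈ cycleMinima f
  · simp [eraseCycleMinima, hx]
  · simp only [eraseCycleMinima, hx, if_false, iff_false]
    exact fun h => hx (mem_cycleMinima_of_apply_eq_self h)

theorem eraseCycleMinima_injective : Function.Injective (eraseCycleMinima (α := α)) := by
  intro f g hfg
  have hM : cycleMinima f = cycleMinima g := by
    ext x
    rw [← eraseCycleMinima_eq_self_iff, ← eraseCycleMinima_eq_self_iff, hfg]
  refine eq_of_cycleMinima_eq hM fun x hx => ?_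
  simpa [eraseCycleMinima, hx, hM ▸ hx] using congrFun hfg x

theorem card_filter_card_compl_cycleMinima_eq_le (d : ℕ) :
    #{f : Perm α | #(cycleMinima f)ᶜ = d} ≤ (Fintype.card α).choose d * Fintype.card α ^ d := by
  calc #{f : Perm α | #(cycleMinima f)ᶜ = d}
      ≤ #((powersetCard d univ).biUnion fun t =>
          Fintype.piFinset fun x => if x ∈ t then univ else {x}) := by
        refine card_le_card_of_injOn eraseCycleMinima (fun f hf => ?_)
          eraseCycleMinima_injective.injOn
        simp only [coe_filter, Set.mem_ofPred_eq, mem_univ, true_and] at hf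
        refine mem_biUnion.2 ⟨_, mem_powersetCard.2 ⟨subset_univ _, hf⟩,
          Fintype.mem_piFinset.2 fun x => ?_⟩
        split_ifs with hx
        · exact mem_univ _
        · exact mem_singleton.2 (eraseCycleMinima_eq_self_iff.2 (by simpa using hx))
    _ ≤ ∑ t ∈ powersetCard d univ, #(Fintype.piFinset fun x => if x ∈ t then univ else {x}) :=
        card_biUnion_le
    _ = (Fintype.card α).choose d * Fintype.card α ^ d := by
        rw [← card_univ, ← card_powersetCard, ← smul_eq_mul, ← sum_const]
        refine sum_congr rfl fun t ht => ?_
        rw [Fintype.card_piFinset, ← (mem_powersetCard.1 ht).2]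
        simp [apply_ite card, prod_ite_mem]

end Minima

end Equiv.Perm

theorem Nat.choose_succ_le_mul (n d : ℕ) : n.choose (d + 1) ≤ n * n.choose d :=
  calc n.choose (d + 1) ≤ n.choose (d + 1) * (d + 1) := Nat.le_mul_of_pos_right _ d.succ_pos
    _ = n.choose d * (n - d) := Nat.choose_succ_right_eq n d
    _ ≤ n * n.choose d := by rw [mul_comm]; exact Nat.mul_le_mul_right _ (Nat.sub_le n d)

theorem Nat.choose_le_factorial_pred_div_mul {n e : ℕ} (hn : n ≠ 0) (hen : e ≤ n) :
    (n.choose e : ℝ) ≤ (n - 1).factorial / (n - e).factorial * n := by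
  rw [div_mul_eq_mul_div, le_div_iff₀ (by positivity)]
  have : n.choose e * (n - e).factorial ≤ (n - 1).factorial * n :=
    calc n.choose e * (n - e).factorial ≤ n.descFactorial e * (n - e).factorial :=
          Nat.mul_le_mul_right _ (Nat.choose_le_descFactorial n e)
      _ = (n - 1).factorial * n := by
          rw [mul_comm, Nat.factorial_mul_descFactorial hen, ← Nat.mul_factorial_pred hn, mul_comm]
  exact_mod_cast this

theorem sum_Ico_le_two_mul_of_le_half {T : ℕ → ℝ} {e : ℕ} (h0 : 0 ≤ T e)
    (hT : ∀ d, e ≤ d → T (d + 1) ≤ T d / 2) (m : ℕ) : ∑ d ∈ Ico e m, T d ≤ 2 * T e := by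
  have hgeom : ∀ j, T (e + j) ≤ T e * (1 / 2) ^ j := by
    intro j
    induction j with
    | zero => simp
    | succ j ih =>
      calc T (e + (j + 1)) ≤ T (e + j) / 2 := hT (e + j) (Nat.le_add_right e j)
        _ ≤ T e * (1 / 2) ^ (j + 1) := by rw [pow_succ]; linarith
  calc ∑ d ∈ Ico e m, T d = ∑ j ∈ range (m - e), T (e + j) := sum_Ico_eq_sum_range T e m
    _ ≤ ∑ j ∈ range (m - e), T e * (1 / 2) ^ j := sum_le_sum fun j _ => hgeom j
    _ ≤ T e * 2 := by rw [← mul_sum]; exact mul_le_mul_of_nonneg_left (sum_geometric_two_le _) h0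
    _ = 2 * T e := mul_comm _ _

theorem sum_Ico_choose_mul_pow_le {n : ℕ} {y : ℝ} (hy : 0 ≤ y) (hny : 2 * n ^ 2 * y ≤ 1)
    (e m : ℕ) :
    ∑ d ∈ Ico e m, (n.choose d : ℝ) * (n * y) ^ d ≤ 2 * ((n.choose e : ℝ) * (n * y) ^ e) := by
  refine sum_Ico_le_two_mul_of_le_half (by positivity) (fun d _ => ?_) m
  have hchoose : (n.choose (d + 1) : ℝ) ≤ n * n.choose d := by
    exact_mod_cast Nat.choose_succ_le_mul n d
  calc (n.choose (d + 1) : ℝ) * (n * y) ^ (d + 1)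
      ≤ n * n.choose d * (n * y) ^ (d + 1) := by gcongr
    _ = n.choose d * (n * y) ^ d * (n ^ 2 * y) := by ring
    _ ≤ n.choose d * (n * y) ^ d * (1 / 2) := by gcongr; linarith
    _ = n.choose d * (n * y) ^ d / 2 := by ring

open Equiv.Perm

section CycleCount

variable {k : ℕ}

theorem cycleCount_eq_card_cycleMinima (f : Perm (Fin k)) : cycleCount f = #(cycleMinima f) := by
  rw [card_cycleMinima, Fintype.card_fin]
  rfl

theorem card_compl_cycleMinima (f : Perm (Fin k)) : #(cycleMinima f)ᶜ = k - cycleCount f := by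
  rw [card_compl, Fintype.card_fin, cycleCount_eq_card_cycleMinima]

theorem cycleCount_le (f : Perm (Fin k)) : cycleCount f ≤ k := by
  simpa [cycleCount_eq_card_cycleMinima] using card_le_univ (cycleMinima f)

theorem cycleCount_pos (hk : 0 < k) (f : Perm (Fin k)) : 0 < cycleCount f := by
  obtain ⟨m, hm, -⟩ := exists_mem_cycleMinima_sameCycle f ⟨0, hk⟩
  exact cycleCount_eq_card_cycleMinima f ▸ card_pos.2 ⟨m, hm⟩

theorem cycleCount_eq_one {ρ : Perm (Fin k)} (hρ : ρ.IsCycle) (hsupp : ρ.support = univ) :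
    cycleCount ρ = 1 := by
  simp [cycleCount, card_cycleType_eq_one.2 hρ, hsupp]

theorem cycleCount_le_swap_mul (f : Perm (Fin k)) (a b : Fin k) :
    cycleCount f ≤ cycleCount (swap a b * f) + 1 := by
  simp only [cycleCount_eq_card_cycleMinima, card_cycleMinima_eq_card_quotient]
  convert card_quotient_sameCycle_le_swap_mul f a b

theorem cycleCount_swap_mul_le (f : Perm (Fin k)) (a b : Fin k) :
    cycleCount (swap a b * f) ≤ cycleCount f + 1 := by
  simpa using cycleCount_le_swap_mul (swap a b * f) a b

theorem cycleCount_le_list_prod_mul_add_length {l : List (Perm (Fin k))}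
    (hl : ∀ τ ∈ l, τ.IsSwap) (g : Perm (Fin k)) :
    cycleCount g ≤ cycleCount (l.prod * g) + l.length := by
  induction l with
  | nil => simp
  | cons τ l ih =>
    obtain ⟨a, b, -, rfl⟩ := hl τ List.mem_cons_self
    have := ih fun τ hτ => hl τ (List.mem_cons_of_mem _ hτ)
    have := cycleCount_le_swap_mul (l.prod * g) a b
    rw [List.prod_cons, List.length_cons, mul_assoc]
    omega

theorem cycleCount_list_prod_mul_le {l : List (Perm (Fin k))}
    (hl : ∀ τ ∈ l, τ.IsSwap) (g : Perm (Fin k)) :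
    cycleCount (l.prod * g) ≤ cycleCount g + l.length := by
  induction l with
  | nil => simp
  | cons τ l ih =>
    obtain ⟨a, b, -, rfl⟩ := hl τ List.mem_cons_self
    have := ih fun τ hτ => hl τ (List.mem_cons_of_mem _ hτ)
    have := cycleCount_swap_mul_le (l.prod * g) a b
    rw [List.prod_cons, List.length_cons, mul_assoc]
    omega

theorem exists_isSwap_list_length_eq (f : Perm (Fin k)) :
    ∃ l : List (Perm (Fin k)), (∀ τ ∈ l, τ.IsSwap) ∧ l.prod = f ∧
      l.length = k - cycleCount f := by
  obtain ⟨l, hl, hprod, hlen⟩ := exists_isSwap_list f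
  refine ⟨l, hl, hprod, ?_⟩
  have := card_cycleType_le_card_support f
  have := (card_le_univ f.support).trans_eq (Fintype.card_fin k)
  rw [hlen, cycleCount]
  omega

end CycleCount

section CayleyWeight

variable {k : ℕ}

theorem cayleyWeight_eq (f : Perm (Fin k)) : cayleyWeight f = k - cycleCount f := by
  obtain ⟨l, hl, hprod, hlen⟩ := exists_isSwap_list_length_eq f
  refine le_antisymm (Nat.sInf_le ⟨l, hlen, hl, hprod⟩) (le_csInf ⟨_, l, rfl, hl, hprod⟩ ?_)
  rintro m ⟨l', rfl, hl', rfl⟩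
  have := cycleCount_le_list_prod_mul_add_length hl' 1
  rw [mul_one] at this
  have h1 : cycleCount (1 : Perm (Fin k)) = k := by simp [cycleCount]
  omega

theorem cycleCount_mul_le (f g : Perm (Fin k)) :
    cycleCount (f * g) ≤ cycleCount g + cayleyWeight f := by
  obtain ⟨l, hl, rfl, hlen⟩ := exists_isSwap_list_length_eq f
  rw [cayleyWeight_eq, ← hlen]
  exact cycleCount_list_prod_mul_le hl g

theorem cycleCount_sub_one_le_cayleyWeight_mul_inv (σ : Perm (Fin k)) {ρ : Perm (Fin k)}
    (hρ : ρ.IsCycle) (hsupp : ρ.support = univ) : cycleCount σ - 1 ≤ cayleyWeight (σ * ρ⁻¹) := by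
  have := cycleCount_mul_le (σ * ρ⁻¹) ρ
  rw [inv_mul_cancel_right, cycleCount_eq_one hρ hsupp] at this
  omega

theorem card_filter_cayleyWeight_eq_le (d : ℕ) :
    #{π : Perm (Fin k) | cayleyWeight π = d} ≤ k.choose d * k ^ d := by
  simpa [cayleyWeight_eq, ← card_compl_cycleMinima] using
    card_filter_card_compl_cycleMinima_eq_le (α := Fin k) d

theorem sum_pow_cayleyWeight_le {y : ℝ} (hy : 0 ≤ y) (hky : 2 * k ^ 2 * y ≤ 1) (e : ℕ) :
    ∑ π ∈ {π : Perm (Fin k) | e ≤ cayleyWeight π}, y ^ cayleyWeight π ≤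
      2 * ((k.choose e : ℝ) * (k * y) ^ e) := by
  have hmaps : ∀ π ∈ ({π | e ≤ cayleyWeight π} : Finset (Perm (Fin k))),
      cayleyWeight π ∈ Ico e (k + 1) := fun π hπ => by
    rw [mem_filter] at hπ
    refine mem_Ico.2 ⟨hπ.2, ?_⟩
    rw [cayleyWeight_eq]
    omega
  rw [← sum_fiberwise_of_maps_to hmaps]
  refine le_trans (sum_le_sum fun d _ => ?_) (sum_Ico_choose_mul_pow_le hy hky e (k + 1))
  calc ∑ π ∈ {π ∈ {π : Perm (Fin k) | e ≤ cayleyWeight π} | cayleyWeight π = d},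
        y ^ cayleyWeight π
      = #{π ∈ {π : Perm (Fin k) | e ≤ cayleyWeight π} | cayleyWeight π = d} * y ^ d := by
        rw [sum_congr rfl fun π hπ => by rw [(mem_filter.1 hπ).2], sum_const, nsmul_eq_mul]
    _ ≤ #{π : Perm (Fin k) | cayleyWeight π = d} * y ^ d := by
        gcongr
        exact subset_univ _
    _ ≤ (k.choose d * k ^ d : ℕ) * y ^ d := by gcongr; exact card_filter_cayleyWeight_eq_le d
    _ = k.choose d * (k * y) ^ d := by push_cast; ring

theorem sum_pow_cayleyWeight_mul_inv_le (σ : Perm (Fin k)) {y : ℝ} (hy : 0 ≤ y)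
    (hky : 2 * k ^ 2 * y ≤ 1) :
    ∑ ρ ∈ univ.filter (fun ρ : Perm (Fin k) => ρ.IsCycle ∧ ρ.support = univ),
        y ^ cayleyWeight (σ * ρ⁻¹) ≤
      2 * ((k.choose (cycleCount σ - 1) : ℝ) * (k * y) ^ (cycleCount σ - 1)) := by
  rw [← sum_image (f := fun π => y ^ cayleyWeight π)
    fun _ _ _ _ h => inv_injective (mul_left_cancel h)]
  refine le_trans (sum_le_sum_of_subset_of_nonneg (fun π hπ => ?_) fun _ _ _ => by positivity)
    (sum_pow_cayleyWeight_le hy hky _)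
  obtain ⟨ρ, hρ, rfl⟩ := mem_image.1 hπ
  rw [mem_filter] at hρ ⊢
  exact ⟨mem_univ _, cycleCount_sub_one_le_cayleyWeight_mul_inv σ hρ.2.1 hρ.2.2⟩

end CayleyWeight

theorem sum_over_k_cycles_le (k : ℕ) (σ : Equiv.Perm (Fin k)) (x : ℝ)
    (hx : 2 * (k : ℝ)^2 < x) :
    ∑ ρ ∈ Finset.univ.filter
        (fun ρ : Equiv.Perm (Fin k) => ρ.IsCycle ∧ ρ.support = Finset.univ),
      x ^ (-(cayleyWeight (σ * ρ⁻¹) : ℝ)) ≤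
      2 * ((Nat.factorial (k-1) : ℝ) / (Nat.factorial (k - cycleCount σ + 1) : ℝ)) *
        (k : ℝ) ^ (cycleCount σ) * x ^ (-(cycleCount σ : ℝ) + 1) := by
  rcases Nat.eq_zero_or_pos k with rfl | hk
  · have hF : ∀ ρ : Perm (Fin 0), ¬ ρ.IsCycle := fun ρ h => h.ne_one (Subsingleton.elim _ _)
    simp [hF] at hx ⊢
    positivity
  have hx0 : 0 < x := lt_of_le_of_lt (by positivity) hx
  have hky : 2 * k ^ 2 * x⁻¹ ≤ 1 := by rw [← div_eq_mul_inv, div_le_one hx0]; exact hx.le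
  obtain ⟨e, hce⟩ : ∃ e, cycleCount σ = e + 1 :=
    Nat.exists_eq_add_one.2 (cycleCount_pos hk σ)
  have hek : e < k := by have := cycleCount_le σ; omega
  have hsum := sum_pow_cayleyWeight_mul_inv_le σ (inv_nonneg.2 hx0.le) hky
  rw [hce, Nat.add_sub_cancel] at hsum
  have hxe : x ^ (-(cycleCount σ : ℝ) + 1) = x⁻¹ ^ e := by
    rw [hce, Nat.cast_succ, neg_add, neg_add_cancel_right, Real.rpow_neg hx0.le,
      Real.rpow_natCast, inv_pow]
  simp_rw [hxe, Real.rpow_neg hx0.le, Real.rpow_natCast, ← inv_pow]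
  rw [hce, show k - (e + 1) + 1 = k - e by omega]
  calc _ ≤ 2 * ((k.choose e : ℝ) * (k * x⁻¹) ^ e) := hsum
    _ = 2 * k.choose e * (k ^ e * x⁻¹ ^ e) := by ring
    _ ≤ 2 * ((k - 1).factorial / (k - e).factorial * k) * (k ^ e * x⁻¹ ^ e) := by
        gcongr
        exact Nat.choose_le_factorial_pred_div_mul hk.ne' hek.le
    _ = _ := by ring
end

section
/- The ordinary generating function over n ≥ 1 and subsets T ⊆ [n] of the vertex set of the n-cycle, weighting by x^n y^{|T|} z^{runs(T)} where runs(T) is the number of connected components of the induced subgraph of the n-cycle on T (with runs(∅) = runs([n]) = 0), equals (2x²yz + xy(1-x) + x(1-xy)) / ((1-xy)(1-x) - x²yz) as a formal power series. -/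
open scoped Classical

/-- The number of "runs" of a subset `T` of the vertices of the `(n+1)`-cycle: the
number of connected components of the induced subgraph, computed as the number of
vertices of `T` whose cyclic successor is not in `T`. This gives
`runs(∅) = runs([n+1]) = 0`. -/
def runsCount (n : ℕ) (T : Finset (Fin (n+1))) : ℕ :=
  (T.filter (fun i => i + 1 ∉ T)).card

/-- The generating function `R(x,y,z) = Σ_{n≥1} Σ_{T ⊆ [n]} xⁿ y^{|T|} z^{runs(T)}`,
as a formal power series in three variables `x = X 0`, `y = X 1`, `z = X 2`. -/
noncomputable def runsGF : MvPowerSeries (Fin 3) ℚ := fun e =>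
  if 1 ≤ e 0 then
    ((Finset.univ.filter (fun T : Finset (Fin (e 0 - 1 + 1)) =>
        T.card = e 1 ∧ runsCount (e 0 - 1) T = e 2)).card : ℚ)
  else 0

/-!
Cut the cycle between `n` and `0`. A subset `T` becomes a subset of the path `0, …, n`, and
`runs T` is the number of descents of `T` along the path (`i ∈ T`, `i + 1 ∉ T`), plus one
if `n ∈ T` and `0 ∉ T`. Sorting subsets of the path by whether they contain the first and
the last vertex, appending a vertex is a two-state transfer matrix: the generating
functions of the path classes solve a linear system with determinant
`(1 - xy)(1 - x) - x²yz`, and Cramer's rule gives each of the four classes, hence `R`.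
-/

open Finset MvPowerSeries
open scoped MvPowerSeries.WithPiTopology

noncomputable def descentCount {n : ℕ} (p : Fin (n + 1) → Prop) : ℕ :=
  #{i : Fin n | p i.castSucc ∧ ¬ p i.succ}

lemma descentCount_succ {n : ℕ} (p : Fin (n + 2) → Prop) :
    descentCount p = descentCount (fun i => p i.castSucc)
      + if p (Fin.last n).castSucc ∧ ¬ p (Fin.last (n + 1)) then 1 else 0 := by
  simp only [descentCount, card_filter, Fin.sum_univ_castSucc, Fin.succ_castSucc, Fin.succ_last]

lemma descentCount_mem_map_castSucc {n : ℕ} (S : Finset (Fin (n + 1))) :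
    descentCount (· ∈ S.map Fin.castSuccEmb)
      = descentCount (· ∈ S) + if Fin.last n ∈ S then 1 else 0 := by
  rw [descentCount_succ]
  simp

lemma descentCount_mem_insert_last_map_castSucc {n : ℕ} (S : Finset (Fin (n + 1))) :
    descentCount (· ∈ insert (Fin.last (n + 1)) (S.map Fin.castSuccEmb))
      = descentCount (· ∈ S) := by
  rw [descentCount_succ]
  simp [Fin.castSucc_ne_last]

lemma runsCount_eq_descentCount_add {n : ℕ} (T : Finset (Fin (n + 1))) :
    runsCount n T = descentCount (· ∈ T) + if Fin.last n ∈ T ∧ 0 ∉ T then 1 else 0 := by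
  have hT : runsCount n T = #{i | i ∈ T ∧ i + 1 ∉ T} := by
    rw [runsCount]; congr 1; ext; simp
  simp only [hT, descentCount, card_filter, Fin.sum_univ_castSucc, Fin.coeSucc_eq_succ,
    Fin.last_add_one]

lemma sum_finsets_fin_castSucc {M : Type*} [AddCommMonoid M] {n : ℕ}
    (f : Finset (Fin (n + 1)) → M) :
    ∑ T, f T = ∑ S : Finset (Fin n),
      (f (S.map Fin.castSuccEmb) + f (insert (Fin.last n) (S.map Fin.castSuccEmb))) := by
  rw [← powerset_univ, Fin.univ_castSuccEmb, cons_eq_insert,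
    sum_powerset_insert (by simp), ← sum_add_distrib, map_eq_image, powerset_image,
    sum_image ((image_injective (Fin.castSuccEmb.injective)).injOn), powerset_univ]
  simp only [map_eq_image]

section Weights

variable {A : Type*} [CommSemiring A] (y z : A)

noncomputable def pathWeight (n : ℕ) (a b : Bool) : A :=
  ∑ T : Finset (Fin (n + 1)) with decide (0 ∈ T) = a ∧ decide (Fin.last n ∈ T) = b,
    y ^ #T * z ^ descentCount (· ∈ T)

noncomputable def cycleWeight (n : ℕ) : A :=
  ∑ T : Finset (Fin (n + 1)), y ^ #T * z ^ runsCount n T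

lemma pathWeight_zero (a b : Bool) :
    pathWeight y z 0 a b = if a = b then (if a then y else 1) else 0 := by
  rw [pathWeight, sum_filter, sum_finsets_fin_castSucc, Fintype.sum_subsingleton _ ∅]
  cases a <;> cases b <;> simp [descentCount]

lemma pathWeight_succ_false (n : ℕ) (a : Bool) :
    pathWeight y z (n + 1) a false = pathWeight y z n a false + z * pathWeight y z n a true := by
  simp only [pathWeight, sum_filter, sum_finsets_fin_castSucc (n := n + 1), mul_sum,
    ← sum_add_distrib]
  refine sum_congr rfl fun S _ => ?_
  rw [descentCount_mem_map_castSucc, descentCount_mem_insert_last_map_castSucc]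
  by_cases h0 : 0 ∈ S <;> by_cases hl : Fin.last n ∈ S <;>
    simp [h0, hl, pow_succ] <;> split_ifs <;> ring

lemma pathWeight_succ_true (n : ℕ) (a : Bool) :
    pathWeight y z (n + 1) a true = y * (pathWeight y z n a false + pathWeight y z n a true) := by
  simp only [pathWeight, sum_filter, sum_finsets_fin_castSucc (n := n + 1), mul_sum,
    ← sum_add_distrib]
  refine sum_congr rfl fun S _ => ?_
  rw [descentCount_mem_map_castSucc, descentCount_mem_insert_last_map_castSucc]
  by_cases h0 : 0 ∈ S <;> by_cases hl : Fin.last n ∈ S <;>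
    simp [h0, hl, pow_succ] <;> split_ifs <;> ring

lemma cycleWeight_eq (n : ℕ) :
    cycleWeight y z n = pathWeight y z n false false + pathWeight y z n true true
      + pathWeight y z n true false + z * pathWeight y z n false true := by
  simp only [cycleWeight, pathWeight, sum_filter, mul_sum, ← sum_add_distrib]
  refine sum_congr rfl fun T _ => ?_
  rw [runsCount_eq_descentCount_add]
  by_cases h0 : 0 ∈ T <;> by_cases hl : Fin.last n ∈ T <;> simp [h0, hl, pow_succ', mul_left_comm]

end Weights

lemma transfer_mul_det {A : Type*} [CommRing A] {x y z F₀ F₁ b₀ b₁ : A}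
    (h₀ : F₀ = b₀ + x * (F₀ + z * F₁)) (h₁ : F₁ = b₁ + x * y * (F₀ + F₁)) :
    F₀ * ((1 - x * y) * (1 - x) - x ^ 2 * y * z) = (1 - x * y) * b₀ + x * z * b₁ ∧
      F₁ * ((1 - x * y) * (1 - x) - x ^ 2 * y * z) = x * y * b₀ + (1 - x) * b₁ :=
  ⟨by linear_combination (1 - x * y) * h₀ + x * z * h₁,
    by linear_combination x * y * h₀ + (1 - x) * h₁⟩

namespace MvPowerSeries

variable {σ R : Type*} [CommRing R]

lemma coeff_X_pow_mul_eq_zero {i : σ} {n : ℕ} {d : σ →₀ ℕ} (h : d i < n)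
    (f : MvPowerSeries σ R) : coeff d (X i ^ n * f) = 0 := by
  rw [X_pow_eq, coeff_monomial_mul, if_neg (by simpa [Finsupp.single_le_iff] using h)]

variable [TopologicalSpace R]

lemma summable_X_pow_mul (i : σ) (c : ℕ → MvPowerSeries σ R) :
    Summable fun n => X i ^ n * c n :=
  WithPiTopology.summable_iff_summable_coeff.mpr fun d =>
    summable_of_ne_finset_zero (s := range (d i + 1)) fun n hn =>
      coeff_X_pow_mul_eq_zero (by simpa using hn) (c n)

variable [IsTopologicalRing R] [T2Space R]

noncomputable def ogf (i : σ) :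
    (ℕ → MvPowerSeries σ R) →ₗ[MvPowerSeries σ R] MvPowerSeries σ R where
  toFun c := ∑' n, X i ^ n * c n
  map_add' c d := by
    simp only [Pi.add_apply, mul_add]
    exact (summable_X_pow_mul i c).tsum_add (summable_X_pow_mul i d)
  map_smul' q c := by
    simp only [Pi.smul_apply, smul_eq_mul, RingHom.id_apply, mul_left_comm _ q]
    exact (summable_X_pow_mul i c).tsum_mul_left q

lemma ogf_apply (i : σ) (c : ℕ → MvPowerSeries σ R) : ogf i c = ∑' n, X i ^ n * c n := rfl

lemma ogf_eq_add_X_mul (i : σ) (c : ℕ → MvPowerSeries σ R) :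
    ogf i c = c 0 + X i * ogf i (fun n => c (n + 1)) := by
  rw [ogf_apply, ogf_apply, (summable_X_pow_mul i c).tsum_eq_zero_add, pow_zero, one_mul,
    ← (summable_X_pow_mul i (fun n => c (n + 1))).tsum_mul_left]
  simp only [pow_succ', mul_assoc]

lemma ogf_pathWeight_false (i : σ) (y z : MvPowerSeries σ R) (a : Bool) :
    ogf i (pathWeight y z · a false) = pathWeight y z 0 a false
      + X i * (ogf i (pathWeight y z · a false) + z * ogf i (pathWeight y z · a true)) := by
  have h : (fun n => pathWeight y z (n + 1) a false)
      = (pathWeight y z · a false) + z • (pathWeight y z · a true) :=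
    funext (pathWeight_succ_false y z · a)
  conv_lhs => rw [ogf_eq_add_X_mul, h, map_add, map_smul, smul_eq_mul]

lemma ogf_pathWeight_true (i : σ) (y z : MvPowerSeries σ R) (a : Bool) :
    ogf i (pathWeight y z · a true) = pathWeight y z 0 a true
      + X i * y * (ogf i (pathWeight y z · a false) + ogf i (pathWeight y z · a true)) := by
  have h : (fun n => pathWeight y z (n + 1) a true)
      = y • ((pathWeight y z · a false) + (pathWeight y z · a true)) :=
    funext (pathWeight_succ_true y z · a)
  conv_lhs => rw [ogf_eq_add_X_mul, h, map_smul, map_add, smul_eq_mul, ← mul_assoc]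

lemma ogf_cycleWeight (i : σ) (y z : MvPowerSeries σ R) :
    ogf i (cycleWeight y z) = ogf i (pathWeight y z · false false)
      + ogf i (pathWeight y z · true true) + ogf i (pathWeight y z · true false)
      + z * ogf i (pathWeight y z · false true) := by
  rw [← smul_eq_mul z, ← map_smul, ← map_add, ← map_add, ← map_add]
  exact congrArg _ (funext (cycleWeight_eq y z))

end MvPowerSeries

lemma coeff_X_pow_mul_X_pow_mul_X_pow {R : Type*} [CommSemiring R] (d : Fin 3 →₀ ℕ)
    (a b c : ℕ) :
    coeff d (X 0 ^ a * X 1 ^ b * X 2 ^ c : MvPowerSeries (Fin 3) R)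
      = if d 0 = a ∧ d 1 = b ∧ d 2 = c then 1 else 0 := by
  simp only [X_pow_eq, monomial_mul_monomial, coeff_monomial, mul_one]
  congr 1
  simp only [Finsupp.ext_iff, Fin.forall_fin_succ]
  simp

lemma coeff_X_pow_mul_cycleWeight (d : Fin 3 →₀ ℕ) (n : ℕ) :
    coeff d (X 0 ^ (n + 1) * cycleWeight (X 1) (X 2) n : MvPowerSeries (Fin 3) ℚ)
      = if d 0 = n + 1 then (#{T | #T = d 1 ∧ runsCount n T = d 2} : ℚ) else 0 := by
  simp only [cycleWeight, mul_sum, ← mul_assoc, map_sum, coeff_X_pow_mul_X_pow_mul_X_pow]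
  split_ifs with h
  · simp [h, eq_comm]
  · simp [h]

lemma coeff_runsGF (d : Fin 3 →₀ ℕ) :
    coeff d runsGF = if 1 ≤ d 0 then
      (#{T : Finset (Fin (d 0 - 1 + 1)) | #T = d 1 ∧ runsCount (d 0 - 1) T = d 2} : ℚ) else 0 :=
  rfl

lemma runsGF_eq_X_mul_ogf : runsGF = X 0 * ogf 0 (cycleWeight (X 1) (X 2)) := by
  rw [ogf_apply, ← (summable_X_pow_mul (R := ℚ) 0 (cycleWeight (X 1) (X 2))).tsum_mul_left]
  refine (HasSum.tsum_eq (WithPiTopology.hasSum_iff_hasSum_coeff.mpr fun d => ?_)).symm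
  simp only [← mul_assoc, ← pow_succ', coeff_X_pow_mul_cycleWeight, coeff_runsGF]
  cases h : d 0 with
  | zero => simp only [Nat.reduceEqDiff, if_false, Nat.one_le_iff_ne_zero]; exact hasSum_zero
  | succ m =>
    simp only [Nat.add_right_cancel_iff, Nat.le_add_left, if_true]
    convert hasSum_single m fun n hn => if_neg (Ne.symm hn)
    exact (if_pos rfl).symm

/-- `R(x,y,z) = (2x²yz + xy(1-x) + x(1-xy)) / ((1-xy)(1-x) - x²yz)`, stated by
multiplying through by the denominator. -/
theorem runsGF_eq :
    runsGF * ((1 - MvPowerSeries.X 0 * MvPowerSeries.X 1) * (1 - MvPowerSeries.X 0)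
        - (MvPowerSeries.X 0)^2 * MvPowerSeries.X 1 * MvPowerSeries.X 2) =
      2 * (MvPowerSeries.X 0)^2 * MvPowerSeries.X 1 * MvPowerSeries.X 2
        + MvPowerSeries.X 0 * MvPowerSeries.X 1 * (1 - MvPowerSeries.X 0)
        + MvPowerSeries.X 0 * (1 - MvPowerSeries.X 0 * MvPowerSeries.X 1) := by
  set x : MvPowerSeries (Fin 3) ℚ := X 0
  set y : MvPowerSeries (Fin 3) ℚ := X 1
  set z : MvPowerSeries (Fin 3) ℚ := X 2
  obtain ⟨hff, hft⟩ := transfer_mul_det (ogf_pathWeight_false 0 y z false)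
    (ogf_pathWeight_true 0 y z false)
  obtain ⟨htf, htt⟩ := transfer_mul_det (ogf_pathWeight_false 0 y z true)
    (ogf_pathWeight_true 0 y z true)
  simp only [pathWeight_zero, Bool.false_eq_true, Bool.true_eq_false, if_true, if_false] at hff hft htf htt
  rw [runsGF_eq_X_mul_ogf, ogf_cycleWeight]
  linear_combination x * (hff + htt + htf + z * hft)
end
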